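/- Let d ≥ 1, p ∈ (1,∞), s ∈ (0,1), let H be a polarizer in ℝ^d, let u : ℝ^d → ℝ, and set v = P_H(u). Then for all x, y ∈ H, writing x̄ = σ_H(x) and ȳ = σ_H(y): |u(x)−u(y)|^p |x−y|^{−(d+sp)} + |u(x̄)−u(y)|^p |x̄−y|^{−(d+sp)} + |u(x)−u(ȳ)|^p |x−ȳ|^{−(d+sp)} + |u(x̄)−u(ȳ)|^p |x̄−ȳ|^{−(d+sp)} ≥ |v(x)−v(y)|^p |x−y|^{−(d+sp)} + |v(x̄)−v(y)|^p |x̄−y|^{−(d+sp)} + |v(x)−v(ȳ)|^p |x−ȳ|^{−(d+sp)} + |v(x̄)−v(ȳ)|^p |x̄−ȳ|^{−(d+sp)}. -/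

import Mathlib

open MeasureTheory Metric Set ENNReal

noncomputable section

/-- `d`-dimensional Euclidean space. -/
abbrev Euc (d : ℕ) : Type := EuclideanSpace ℝ (Fin d)

/-- The open affine half-space (polarizer) `{x : ⟪x, h⟫ < a}`. -/
def halfSpace {d : ℕ} (h : Euc d) (a : ℝ) : Set (Euc d) :=
  {x : Euc d | (inner ℝ x h : ℝ) < a}

/-- Reflection across the affine hyperplane `{x : ⟪x, h⟫ = a}`:
`σ_H x = x - 2(⟪x,h⟫ - a) h`. -/
def reflH {d : ℕ} (h : Euc d) (a : ℝ) (x : Euc d) : Euc d :=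
  x - (2 * ((inner ℝ x h : ℝ) - a)) • h

/-- Polarization of a set with respect to the polarizer `H = {x : ⟪x,h⟫ < a}`. -/
def polSet {d : ℕ} (h : Euc d) (a : ℝ) (Ω : Set (Euc d)) : Set (Euc d) :=
  ((Ω ∪ reflH h a '' Ω) ∩ halfSpace h a) ∪ (Ω ∩ reflH h a '' Ω)

/-- Dual polarization of a set. -/
def polSetDual {d : ℕ} (h : Euc d) (a : ℝ) (Ω : Set (Euc d)) : Set (Euc d) :=
  ((Ω ∪ reflH h a '' Ω) ∩ (halfSpace h a)ᶜ) ∪ (Ω ∩ reflH h a '' Ω)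

/-- Polarization of a function. -/
def polFun {d : ℕ} (h : Euc d) (a : ℝ) (u : Euc d → ℝ) (x : Euc d) : ℝ :=
  if (inner ℝ x h : ℝ) < a then max (u x) (u (reflH h a x)) else min (u x) (u (reflH h a x))

/-- The `p`-th power of the Gagliardo seminorm `[u]_{s,p}^p`. -/
def gagP (d : ℕ) (s p : ℝ) (u : Euc d → ℝ) : ℝ≥0∞ :=
  ∫⁻ z : Euc d × Euc d, ENNReal.ofReal (|u z.1 - u z.2| ^ p / dist z.1 z.2 ^ ((d : ℝ) + s * p))

/-- Membership in the fractional Sobolev space `W^{s,p}_0(Ω)`. -/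
def memW0 (d : ℕ) (s p : ℝ) (Ω : Set (Euc d)) (u : Euc d → ℝ) : Prop :=
  MemLp u (ENNReal.ofReal p) (volume : Measure (Euc d)) ∧
  gagP d s p u < ⊤ ∧
  ∀ᵐ x : Euc d, x ∉ Ω → u x = 0

/-- The first `q`-eigenvalue `λ^s_{p,q}(Ω) = inf {[u]_{s,p}^p : u ∈ W^{s,p}_0(Ω), ‖u‖_{L^q(Ω)} = 1}`. -/
def lamSPQ (d : ℕ) (s p q : ℝ) (Ω : Set (Euc d)) : ℝ≥0∞ :=
  sInf { l : ℝ≥0∞ | ∃ u : Euc d → ℝ, memW0 d s p Ω u ∧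
    (∫⁻ x in Ω, ENNReal.ofReal (|u x| ^ q)) = 1 ∧ l = gagP d s p u }

/-- `q ∈ [1, p*_s)` where `p*_s = dp/(d - sp)` if `sp < d` and `p*_s = ∞` otherwise. -/
def subcritical (d : ℕ) (s p q : ℝ) : Prop :=
  1 ≤ q ∧ (s * p < (d : ℝ) → q < ((d : ℝ) * p) / ((d : ℝ) - s * p))

/-- The first standard basis vector `e₁` of `ℝ^d`. -/
def e1Vec (d : ℕ) : Euc d :=
  (EuclideanSpace.equiv (Fin d) ℝ).symm (fun i => if (i : ℕ) = 0 then 1 else 0)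

/-- The annular domain `Ω_t = B_R(0) \ cl(B_r(t e₁))`. -/
def annulus (d : ℕ) (r R t : ℝ) : Set (Euc d) :=
  ball (0 : Euc d) R \ closure (ball (t • e1Vec d) r)

/-- `Ω` has a boundary of class `C^{1,1}`: near each boundary point, `Ω` is (in suitable
coordinates) the region below the graph of a `C^1` function with Lipschitz derivative,
and the boundary is the graph. -/
def HasC11Boundary {d : ℕ} (Ω : Set (Euc d)) : Prop :=
  ∀ x ∈ frontier Ω, ∃ (ν : Euc d) (r : ℝ) (f : Euc d → ℝ) (K : NNReal),
    ‖ν‖ = 1 ∧ 0 < r ∧ ContDiff ℝ 1 f ∧ LipschitzWith K (fderiv ℝ f) ∧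
    ∀ y ∈ ball x r,
      (y ∈ Ω ↔ (inner ℝ y ν : ℝ) < f (y - ((inner ℝ y ν : ℝ)) • ν)) ∧
      (y ∈ frontier Ω ↔ (inner ℝ y ν : ℝ) = f (y - ((inner ℝ y ν : ℝ)) • ν))

/-- `G(t) = |t|^{p-2} t`. -/
def Gp (p t : ℝ) : ℝ := |t| ^ (p - 2) * t

/-- Steiner symmetry with respect to the hyperplane `{x₁ = 0}`, characterized via
polarizations by half-spaces `H_a = {x : x₁ < a}`. -/
def SteinerSymmE1 (d : ℕ) (A : Set (Euc d)) : Prop :=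
  (∀ a : ℝ, 0 ≤ a → polSet (e1Vec d) a A = A) ∧
  (∀ a : ℝ, a ≤ 0 → polSetDual (e1Vec d) a A = A)

/-- Foliated Schwarz symmetry with respect to the ray `c + ℝ⁺ η`, characterized via
polarizations by half-spaces containing the ray with `c` on the boundary hyperplane. -/
def FoliatedSchwarzSymm (d : ℕ) (c η : Euc d) (A : Set (Euc d)) : Prop :=
  ∀ (h : Euc d) (b : ℝ), ‖h‖ = 1 →
    (∀ t : ℝ, 0 < t → c + t • η ∈ halfSpace h b) → (inner ℝ c h : ℝ) = b →
    polSet h b A = A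

/-- The simple rotation with plane of rotation `span{η, ξ}` and angle `θ`, fixing the
orthogonal complement of the plane pointwise. -/
def rotMap (d : ℕ) (η ξ : Euc d) (θ : ℝ) (x : Euc d) : Euc d :=
  x - (inner ℝ x η : ℝ) • η - (inner ℝ x ξ : ℝ) • ξ
    + (Real.cos θ * (inner ℝ x η : ℝ) - Real.sin θ * (inner ℝ x ξ : ℝ)) • η
    + (Real.sin θ * (inner ℝ x η : ℝ) + Real.cos θ * (inner ℝ x ξ : ℝ)) • ξ

/-!
For `x, y ∈ H` the reflection gives `|x - y| = |x̄ - ȳ| ≤ |x̄ - y| = |x - ȳ|`, so the four terms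
carry weights `α, β, β, α` with `β ≤ α`. Write `A = u x`, `B = u x̄`, `C = u y`, `D = u ȳ`;
polarization replaces `(A, B)` and `(C, D)` by `(max, min)`. If both pairs are already ordered
the same way nothing changes; otherwise the gain is
`(α - β) (f (A - C) + f (B - D) - f (A - D) - f (B - C)) ≥ 0` for the convex `f = |·|^p`,
because `A - D` and `B - C` lie between `B - D` and `A - C` and have the same sum.
-/

theorem convexOn_univ_norm_rpow {E : Type*} [SeminormedAddCommGroup E] [NormedSpace ℝ E]
    {p : ℝ} (hp : 1 ≤ p) : ConvexOn ℝ univ fun x : E => ‖x‖ ^ p := by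
  refine ⟨convex_univ, fun x _ y _ α β hα hβ hαβ => ?_⟩
  calc ‖α • x + β • y‖ ^ p ≤ (α * ‖x‖ + β * ‖y‖) ^ p := by
        gcongr
        calc ‖α • x + β • y‖ ≤ ‖α • x‖ + ‖β • y‖ := norm_add_le _ _
          _ = α * ‖x‖ + β * ‖y‖ := by
            rw [norm_smul, norm_smul, Real.norm_of_nonneg hα, Real.norm_of_nonneg hβ]
    _ ≤ α • ‖x‖ ^ p + β • ‖y‖ ^ p :=
        (convexOn_rpow hp).2 (norm_nonneg x) (norm_nonneg y) hα hβ hαβ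

theorem ConvexOn.map_add_map_le_map_add_map {s : Set ℝ} {f : ℝ → ℝ} (hf : ConvexOn ℝ s f)
    {a b c d : ℝ} (ha : a ∈ s) (hd : d ∈ s) (hab : a ≤ b) (hbd : b ≤ d) (hsum : a + d = b + c) :
    f b + f c ≤ f a + f d := by
  rcases (hab.trans hbd).eq_or_lt with had | had
  · obtain rfl : b = a := le_antisymm (had ▸ hbd) hab
    obtain rfl : c = d := by linarith
    rfl
  have hda : 0 < d - a := sub_pos.2 had
  -- `b` and `c` are the convex combinations of `a` and `d` with swapped weights.
  set θ := (d - b) / (d - a)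
  have hθ : θ * (d - a) = d - b := div_mul_cancel₀ _ hda.ne'
  have hθ₀ : 0 ≤ θ := div_nonneg (by linarith) hda.le
  have hθ₁ : 0 ≤ 1 - θ := sub_nonneg.2 (div_le_one_of_le₀ (by linarith) hda.le)
  have hb : θ • a + (1 - θ) • d = b := by simp only [smul_eq_mul]; linear_combination -hθ
  have hc : (1 - θ) • a + θ • d = c := by simp only [smul_eq_mul]; linear_combination hθ + hsum
  have hfb := hf.2 ha hd hθ₀ hθ₁ (by ring)
  have hfc := hf.2 ha hd hθ₁ hθ₀ (by ring)
  rw [hb] at hfb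
  rw [hc] at hfc
  simp only [smul_eq_mul] at hfb hfc
  linarith

theorem ConvexOn.map_sub_add_map_sub_le {f : ℝ → ℝ} (hf : ConvexOn ℝ univ f) {A B C D : ℝ}
    (hBA : B ≤ A) (hCD : C ≤ D) : f (A - D) + f (B - C) ≤ f (A - C) + f (B - D) := by
  have := hf.map_add_map_le_map_add_map (b := A - D) (c := B - C) (mem_univ (B - D))
    (mem_univ (A - C)) (by linarith) (by linarith) (by ring)
  linarith

theorem ConvexOn.weighted_max_min_le {f : ℝ → ℝ} (hf : ConvexOn ℝ univ f) (A B C D : ℝ)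
    {α β : ℝ} (hβα : β ≤ α) :
    α * f (max A B - max C D) + β * f (min A B - max C D)
      + β * f (max A B - min C D) + α * f (min A B - min C D)
    ≤ α * f (A - C) + β * f (B - C) + β * f (A - D) + α * f (B - D) := by
  wlog hBA : B ≤ A generalizing A B C D
  · have := this B A D C (le_of_not_ge hBA)
    rw [max_comm B A, min_comm B A, max_comm D C, min_comm D C] at this
    linarith
  rw [max_eq_left hBA, min_eq_right hBA]
  rcases le_total D C with hDC | hCD
  · rw [max_eq_left hDC, min_eq_right hDC]
  · rw [max_eq_right hCD, min_eq_left hCD]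
    nlinarith [mul_nonneg (sub_nonneg.2 hβα) (sub_nonneg.2 (hf.map_sub_add_map_sub_le hBA hCD))]

section Reflection

variable {d : ℕ} {h : Euc d} {a : ℝ}

theorem inner_reflH (hh : ‖h‖ = 1) (x : Euc d) :
    (inner ℝ (reflH h a x) h : ℝ) = 2 * a - inner ℝ x h := by
  rw [reflH, inner_sub_left, real_inner_smul_left, real_inner_self_eq_norm_sq, hh]
  ring

theorem reflH_reflH (hh : ‖h‖ = 1) (x : Euc d) : reflH h a (reflH h a x) = x := by
  rw [reflH, inner_reflH hh, reflH]
  match_scalars <;> ring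

theorem norm_reflH_sub_sq (hh : ‖h‖ = 1) (x y : Euc d) :
    ‖reflH h a x - y‖ ^ 2
      = ‖x - y‖ ^ 2 + 4 * ((inner ℝ x h - a) * (inner ℝ y h - a)) := by
  have hxy : reflH h a x - y = (x - y) - (2 * (inner ℝ x h - a)) • h := by
    rw [reflH]; abel
  rw [hxy, norm_sub_sq_real, real_inner_smul_right, norm_smul, mul_pow, hh, Real.norm_eq_abs,
    sq_abs, inner_sub_left]
  ring

theorem norm_reflH_sub_reflH (hh : ‖h‖ = 1) (x y : Euc d) :
    ‖reflH h a x - reflH h a y‖ = ‖x - y‖ := by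
  have hsq := norm_reflH_sub_sq (a := a) hh x (reflH h a y)
  rw [← sq_eq_sq₀ (norm_nonneg _) (norm_nonneg _), hsq, norm_sub_rev x,
    norm_reflH_sub_sq hh y x, inner_reflH hh, norm_sub_rev y]
  ring

theorem norm_sub_reflH (hh : ‖h‖ = 1) (x y : Euc d) :
    ‖x - reflH h a y‖ = ‖reflH h a x - y‖ := by
  rw [← norm_reflH_sub_reflH hh, reflH_reflH hh]

theorem norm_sub_le_norm_reflH_sub (hh : ‖h‖ = 1) {x y : Euc d} (hx : x ∈ halfSpace h a)
    (hy : y ∈ halfSpace h a) : ‖x - y‖ ≤ ‖reflH h a x - y‖ := by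
  have hxy : 0 < (inner ℝ x h - a) * (inner ℝ y h - a) :=
    mul_pos_of_neg_of_neg (sub_neg.2 hx) (sub_neg.2 hy)
  refine le_of_sq_le_sq ?_ (norm_nonneg _)
  rw [norm_reflH_sub_sq hh]
  linarith

theorem polFun_of_mem (u : Euc d → ℝ) {x : Euc d} (hx : x ∈ halfSpace h a) :
    polFun h a u x = max (u x) (u (reflH h a x)) :=
  if_pos hx

theorem polFun_reflH_of_mem (hh : ‖h‖ = 1) (u : Euc d → ℝ) {x : Euc d}
    (hx : x ∈ halfSpace h a) : polFun h a u (reflH h a x) = min (u x) (u (reflH h a x)) := by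
  have hx' : ¬ (inner ℝ (reflH h a x) h : ℝ) < a := by
    rw [inner_reflH hh]; linarith [show (inner ℝ x h : ℝ) < a from hx]
  rw [polFun, if_neg hx', reflH_reflH hh, min_comm]

end Reflection

theorem four_term_inequality_general (d : ℕ) (s p : ℝ)
    (hp : 1 < p) (hs : s ∈ Set.Ioo (0 : ℝ) 1)
    (h : Euc d) (a : ℝ) (hh : ‖h‖ = 1) (u : Euc d → ℝ)
    (x y : Euc d) (hx : x ∈ halfSpace h a) (hy : y ∈ halfSpace h a) :
    |polFun h a u x - polFun h a u y| ^ p / ‖x - y‖ ^ ((d : ℝ) + s * p)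
      + |polFun h a u (reflH h a x) - polFun h a u y| ^ p
          / ‖reflH h a x - y‖ ^ ((d : ℝ) + s * p)
      + |polFun h a u x - polFun h a u (reflH h a y)| ^ p
          / ‖x - reflH h a y‖ ^ ((d : ℝ) + s * p)
      + |polFun h a u (reflH h a x) - polFun h a u (reflH h a y)| ^ p
          / ‖reflH h a x - reflH h a y‖ ^ ((d : ℝ) + s * p)
    ≤ |u x - u y| ^ p / ‖x - y‖ ^ ((d : ℝ) + s * p)
      + |u (reflH h a x) - u y| ^ p / ‖reflH h a x - y‖ ^ ((d : ℝ) + s * p)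
      + |u x - u (reflH h a y)| ^ p / ‖x - reflH h a y‖ ^ ((d : ℝ) + s * p)
      + |u (reflH h a x) - u (reflH h a y)| ^ p
          / ‖reflH h a x - reflH h a y‖ ^ ((d : ℝ) + s * p) := by
  have hq : 0 < (d : ℝ) + s * p := by have := mul_pos hs.1 (one_pos.trans hp); positivity
  rw [polFun_of_mem u hx, polFun_of_mem u hy, polFun_reflH_of_mem hh u hx,
    polFun_reflH_of_mem hh u hy, norm_reflH_sub_reflH hh, norm_sub_reflH hh]
  rcases eq_or_ne x y with rfl | hne
  · -- On the diagonal the terms over `‖x - x‖ ^ (d + s p) = 0` vanish (`t / 0 = 0`) and the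
    -- two cross terms are merely permuted.
    simp [Real.zero_rpow hq.ne', abs_sub_comm (min _ _), max_sub_min_eq_abs', abs_sub_comm (u x)]
  have hweight : (‖reflH h a x - y‖ ^ ((d : ℝ) + s * p))⁻¹ ≤ (‖x - y‖ ^ ((d : ℝ) + s * p))⁻¹ :=
    inv_anti₀ (by have := norm_sub_pos_iff.2 hne; positivity)
      (Real.rpow_le_rpow (norm_nonneg _) (norm_sub_le_norm_reflH_sub hh hx hy) hq.le)
  simp only [div_eq_inv_mul]
  simpa only [Real.norm_eq_abs] using
    (convexOn_univ_norm_rpow (E := ℝ) hp.le).weighted_max_min_le (u x) (u (reflH h a x)) (u y)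
      (u (reflH h a y)) hweight

/-- **Pointwise four-term inequality for polarization.**
For `x, y ∈ H`, writing `x̄ = σ_H x`, `ȳ = σ_H y` and `v = P_H u`, the sum of the four
Gagliardo integrand terms for `v` is bounded by the one for `u`. -/
theorem four_term_inequality (d : ℕ) (hd : 1 ≤ d) (s p : ℝ)
    (hp : 1 < p) (hs : s ∈ Set.Ioo (0 : ℝ) 1)
    (h : Euc d) (a : ℝ) (hh : ‖h‖ = 1) (u : Euc d → ℝ)
    (x y : Euc d) (hx : x ∈ halfSpace h a) (hy : y ∈ halfSpace h a) :
    |polFun h a u x - polFun h a u y| ^ p / ‖x - y‖ ^ ((d : ℝ) + s * p)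
      + |polFun h a u (reflH h a x) - polFun h a u y| ^ p
          / ‖reflH h a x - y‖ ^ ((d : ℝ) + s * p)
      + |polFun h a u x - polFun h a u (reflH h a y)| ^ p
          / ‖x - reflH h a y‖ ^ ((d : ℝ) + s * p)
      + |polFun h a u (reflH h a x) - polFun h a u (reflH h a y)| ^ p
          / ‖reflH h a x - reflH h a y‖ ^ ((d : ℝ) + s * p)
    ≤ |u x - u y| ^ p / ‖x - y‖ ^ ((d : ℝ) + s * p)
      + |u (reflH h a x) - u y| ^ p / ‖reflH h a x - y‖ ^ ((d : ℝ) + s * p)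
      + |u x - u (reflH h a y)| ^ p / ‖x - reflH h a y‖ ^ ((d : ℝ) + s * p)
      + |u (reflH h a x) - u (reflH h a y)| ^ p
          / ‖reflH h a x - reflH h a y‖ ^ ((d : ℝ) + s * p) :=
  four_term_inequality_general d s p hp hs h a hh u x y hx hy
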